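/- arXiv:1901.02870 — 3 statements merged into one kernel-verified Lean document; each statement's English description precedes it below -/
import Mathlib

section
/- Let Γ be an acyclic simple graph on a finite vertex set S, let σ be a graph automorphism of Γ, and let r_1, …, r_a ∈ S be vertices such that r_j is adjacent to r_{j+1} for 1 ≤ j ≤ a−1 and such that every σ-orbit in S contains exactly one of r_1, …, r_a. For 1 ≤ i ≤ a+1 define Σ_i^♭ to be the union of the σ-orbits of r_i, …, r_a, define Σ_i to be the σ-orbit of r_{i−1} (and Σ_1 := ∅), and define Σ_i^♯ := S − (Σ_i^♭ ∪ Σ_i). Then S is the disjoint union of Σ_i^♭, Σ_i and Σ_i^♯; each of these three sets is stable under σ; and no vertex of Σ_i^♭ is adjacent to a vertex of Σ_i^♯. -/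
/-!
If a vertex of the orbit of `r j` were adjacent to a vertex of the orbit of `r k` with
`j + 2 ≤ k`, then after translating we would have an edge `r j — π (r k)` for some power
`π` of `σ`. The path `r j, …, r k` avoids every translate of this edge, so the translates
`π ^ t (r j, …, r k)`, linked by the edges `π ^ t (r j) — π ^ (t + 1) (r k)`, lead from
`π (r k)` back to `r j` once `π ^ t` returns `r j` to itself. The edge is then not a bridge,
which is impossible in a forest.
-/

open Equiv

namespace SimpleGraph

variable {V : Type*} {G : SimpleGraph V}

lemma reachable_of_adj_succ {f : ℕ → V} {j k : ℕ} (hjk : j ≤ k)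
    (hf : ∀ l, j ≤ l → l < k → G.Adj (f l) (f (l + 1))) : G.Reachable (f j) (f k) := by
  induction k, hjk using Nat.le_induction with
  | base => rfl
  | succ k hjk ih =>
    exact (ih fun l hl hlk => hf l hl (by omega)).trans (hf k hjk k.lt_succ_self).reachable

section Automorphism

variable {π : Perm V} (hπ : ∀ x y, G.Adj (π x) (π y) ↔ G.Adj x y)
include hπ

lemma adj_zpow_apply_iff (n : ℤ) {x y : V} : G.Adj ((π ^ n) x) ((π ^ n) y) ↔ G.Adj x y := by
  induction n using Int.induction_on generalizing x y with
  | zero => simp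
  | succ n ih => rw [zpow_add_one, Perm.mul_apply, Perm.mul_apply, ih, hπ]
  | pred n ih =>
    rw [zpow_sub_one, Perm.mul_apply, Perm.mul_apply, ih, ← hπ]
    simp only [Perm.coe_inv, apply_symm_apply]

lemma Reachable.zpow_apply_deleteEdges_orbit {e : Sym2 V} {x y : V}
    (h : (G.deleteEdges (Set.range fun n : ℤ => Sym2.map ⇑(π ^ n) e)).Reachable x y) (t : ℤ) :
    (G.deleteEdges (Set.range fun n : ℤ => Sym2.map ⇑(π ^ n) e)).Reachable
      ((π ^ t) x) ((π ^ t) y) := by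
  refine h.map ⟨π ^ t, fun {x y} hxy => ?_⟩
  rw [deleteEdges_adj] at hxy ⊢
  refine ⟨(adj_zpow_apply_iff hπ t).mpr hxy.1, fun ⟨n, hn⟩ => hxy.2 ⟨n - t, ?_⟩⟩
  have := congrArg (Sym2.map ⇑(π ^ (-t))) hn
  rw [Sym2.map_map, ← Perm.coe_mul, ← zpow_add, neg_add_eq_sub] at this
  refine this.trans ?_
  rw [zpow_neg, Perm.coe_inv, Sym2.map_mk, symm_apply_apply, symm_apply_apply]

theorem IsAcyclic.not_adj_of_reachable_deleteEdges_orbit [Finite V] (hG : G.IsAcyclic)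
    {u w : V} (huw : ¬ π.SameCycle u w)
    (hreach : (G.deleteEdges (Set.range fun n : ℤ => Sym2.map ⇑(π ^ n) s(u, π w))).Reachable u w) :
    ¬ G.Adj u (π w) := by
  intro hadj
  set e := s(u, π w)
  have hle : G.deleteEdges (Set.range fun n : ℤ => Sym2.map ⇑(π ^ n) e) ≤ G.deleteEdges {e} :=
    deleteEdges_anti (Set.singleton_subset_iff.mpr ⟨0, by simp⟩)
  have htranslate (t : ℕ) : (G.deleteEdges {e}).Reachable ((π ^ t) u) ((π ^ t) w) := by
    simpa using (hreach.zpow_apply_deleteEdges_orbit hπ t).mono hle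
  set q := Function.minimalPeriod π u
  have hq : 0 < q := Function.minimalPeriod_pos_of_mem_periodicPts (π.injective.mem_periodicPts u)
  have hchain (t : ℕ) (ht : 1 ≤ t) (htq : t ≤ q) :
      (G.deleteEdges {e}).Reachable (π w) ((π ^ t) u) := by
    induction t, ht using Nat.le_induction with
    | base => simpa using (htranslate 1).symm
    | succ t ht ih =>
      have hjump : (G.deleteEdges {e}).Adj ((π ^ t) u) ((π ^ (t + 1)) w) := by
        rw [deleteEdges_adj, pow_succ, Perm.mul_apply]
        refine ⟨(adj_zpow_apply_iff hπ t).mpr hadj, ?_⟩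
        rw [Set.mem_singleton_iff, Sym2.eq_iff]
        rintro (⟨hu, -⟩ | ⟨hu, -⟩)
        · exact Function.not_isPeriodicPt_of_pos_of_lt_minimalPeriod (by omega) (by omega) hu
        · exact huw (Perm.sameCycle_apply_right.mp ⟨t, hu⟩)
      exact (ih (by omega)).trans (hjump.reachable.trans (htranslate (t + 1)).symm)
  have hback : (G.deleteEdges {e}).Reachable (π w) u := by
    simpa [← Perm.iterate_eq_pow, q, Function.iterate_minimalPeriod] using hchain q hq le_rfl
  exact isAcyclic_iff_forall_adj_isBridge.mp hG hadj hback.symm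

end Automorphism

end SimpleGraph

lemma Equiv.Perm.image_eq_of_sameCycle_closed {α : Type*} {σ : Perm α} {T : Set α}
    (hT : ∀ ⦃x y⦄, σ.SameCycle x y → x ∈ T → y ∈ T) : σ '' T = T := by
  ext y
  rw [Set.mem_image_equiv]
  exact ⟨hT ⟨1, by simp⟩, hT ⟨-1, by simp⟩⟩

section OrbitRepresentatives

variable {S : Type*} {σ : Perm S} {a : ℕ} {r : ℕ → S}
  (horb : ∀ s : S, ∃! j : ℕ, 1 ≤ j ∧ j ≤ a ∧ σ.SameCycle (r j) s)
include horb

lemma eq_of_sameCycle_representatives {j k : ℕ} (hj : 1 ≤ j ∧ j ≤ a) (hk : 1 ≤ k ∧ k ≤ a)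
    (h : σ.SameCycle (r j) (r k)) : j = k :=
  (horb (r k)).unique ⟨hj.1, hj.2, h⟩ ⟨hk.1, hk.2, .refl _ _⟩

lemma not_adj_of_sameCycle_representatives [Finite S] {Γ : SimpleGraph S} (hacyc : Γ.IsAcyclic)
    (hσ : ∀ x y, Γ.Adj (σ x) (σ y) ↔ Γ.Adj x y)
    (hadj : ∀ j : ℕ, 1 ≤ j → j < a → Γ.Adj (r j) (r (j + 1)))
    {j k : ℕ} (hj : 1 ≤ j) (hjk : j + 2 ≤ k) (hk : k ≤ a) {x y : S}
    (hx : σ.SameCycle (r j) x) (hy : σ.SameCycle (r k) y) : ¬ Γ.Adj x y := by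
  obtain ⟨m, rfl⟩ := hx
  obtain ⟨n, rfl⟩ := hy
  set π := σ ^ (-m + n)
  have hπ (x y : S) : Γ.Adj (π x) (π y) ↔ Γ.Adj x y := Γ.adj_zpow_apply_iff hσ _
  have hidx {l l' : ℕ} (hl : 1 ≤ l ∧ l ≤ a) (hl' : 1 ≤ l' ∧ l' ≤ a)
      (h : π.SameCycle (r l) (r l')) : l = l' :=
    eq_of_sameCycle_representatives horb hl hl' h.of_zpow
  have hpath : ∀ l, j ≤ l → l < k → (Γ.deleteEdges (Set.range fun t : ℤ =>
      Sym2.map ⇑(π ^ t) s(r j, π (r k)))).Adj (r l) (r (l + 1)) := by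
    intro l hjl hlk
    refine (SimpleGraph.deleteEdges_adj ..).mpr ⟨hadj l (by omega) (by omega), ?_⟩
    rintro ⟨t, ht⟩
    simp only [Sym2.map_mk, Sym2.eq_iff] at ht
    rcases ht with ⟨h₁, h₂⟩ | ⟨-, h₂⟩
    · have := hidx ⟨hj, by omega⟩ ⟨by omega, by omega⟩ ⟨t, h₁⟩
      have := hidx ⟨by omega, hk⟩ ⟨by omega, by omega⟩ (Perm.sameCycle_apply_left.mp ⟨t, h₂⟩)
      omega
    · have := hidx ⟨by omega, hk⟩ ⟨by omega, by omega⟩ (Perm.sameCycle_apply_left.mp ⟨t, h₂⟩)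
      omega
  have hsep : ¬ π.SameCycle (r j) (r k) := fun h => by
    have := hidx ⟨hj, by omega⟩ ⟨by omega, hk⟩ h
    omega
  have hshift : Γ.Adj ((σ ^ m) (r j)) ((σ ^ n) (r k)) ↔ Γ.Adj (r j) (π (r k)) := by
    rw [← Γ.adj_zpow_apply_iff hσ (-m), ← Perm.mul_apply, ← zpow_add, neg_add_cancel, zpow_zero,
      Perm.one_apply, ← Perm.mul_apply, ← zpow_add]
  rw [hshift]
  exact hacyc.not_adj_of_reachable_deleteEdges_orbit hπ hsep
    (SimpleGraph.reachable_of_adj_succ (by omega) hpath)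

end OrbitRepresentatives

theorem stmt1_general {S : Type*} [Fintype S] (Γ : SimpleGraph S) (hacyc : Γ.IsAcyclic)
    (σ : Equiv.Perm S) (hσ : ∀ x y : S, Γ.Adj (σ x) (σ y) ↔ Γ.Adj x y)
    (a : ℕ) (r : ℕ → S)
    (hadj : ∀ j : ℕ, 1 ≤ j → j < a → Γ.Adj (r j) (r (j + 1)))
    (horb : ∀ s : S, ∃! j : ℕ, 1 ≤ j ∧ j ≤ a ∧ ∃ m : ℤ, (σ ^ m) (r j) = s)
    (i : ℕ)
    (Sb Sm Ss : Set S)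
    (hSb : Sb = {s | ∃ j : ℕ, i ≤ j ∧ j ≤ a ∧ ∃ m : ℤ, (σ ^ m) (r j) = s})
    (hSm : Sm = {s | 2 ≤ i ∧ ∃ m : ℤ, (σ ^ m) (r (i - 1)) = s})
    (hSs : Ss = Set.univ \ (Sb ∪ Sm)) :
    (Set.univ = Sb ∪ Sm ∪ Ss ∧ Disjoint Sb Sm ∧ Disjoint Sb Ss ∧ Disjoint Sm Ss) ∧
    (σ '' Sb = Sb ∧ σ '' Sm = Sm ∧ σ '' Ss = Ss) ∧
    (∀ x ∈ Sb, ∀ y ∈ Ss, ¬ Γ.Adj x y) := by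
  subst hSs
  have hb : σ '' Sb = Sb := σ.image_eq_of_sameCycle_closed <| hSb ▸
    fun x y hxy ⟨j, hij, hja, hx⟩ => ⟨j, hij, hja, Perm.SameCycle.trans hx hxy⟩
  have hm : σ '' Sm = Sm := σ.image_eq_of_sameCycle_closed <| hSm ▸
    fun x y hxy ⟨h2i, hx⟩ => ⟨h2i, Perm.SameCycle.trans hx hxy⟩
  subst hSb hSm
  refine ⟨⟨by rw [Set.union_sdiff_self, Set.union_univ], ?_,
    Set.disjoint_sdiff_right.mono_left Set.subset_union_left,
    Set.disjoint_sdiff_right.mono_left Set.subset_union_right⟩,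
    ⟨hb, hm, by rw [Set.image_sdiff σ.injective, Set.image_union, hb, hm,
      Set.image_univ_of_surjective σ.surjective]⟩, ?_⟩
  · refine Set.disjoint_left.mpr fun x ⟨j, hij, hja, hx⟩ ⟨h2i, hx'⟩ => ?_
    have := eq_of_sameCycle_representatives horb ⟨by omega, hja⟩ ⟨by omega, by omega⟩
      (Perm.SameCycle.trans hx (Perm.SameCycle.symm hx'))
    omega
  · rintro x ⟨k, hik, hka, hx⟩ y ⟨-, hy⟩ hxy
    obtain ⟨j, ⟨hj, hja, hy'⟩, -⟩ := horb y
    have hji : j < i := by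
      by_contra!
      exact hy (Or.inl ⟨j, this, hja, hy'⟩)
    have hji' : j ≠ i - 1 := by
      rintro rfl
      exact hy (Or.inr ⟨by omega, hy'⟩)
    exact not_adj_of_sameCycle_representatives horb hacyc hσ hadj hj (by omega) hka hy' hx
      hxy.symm

/-- Let `Γ` be an acyclic simple graph on a finite vertex set `S`,
`σ` a graph automorphism, and `r 1, …, r a` a path in `Γ` forming a complete set
of representatives of the `σ`-orbits in `S`.  For `1 ≤ i ≤ a+1` let `Sb` be the
union of the `σ`-orbits of `r i, …, r a`, let `Sm` be the `σ`-orbit of `r (i-1)`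
(empty if `i = 1`), and `Ss := S \ (Sb ∪ Sm)`.  Then `S` is the disjoint union of
`Sb`, `Sm`, `Ss`; each of the three sets is `σ`-stable; and no vertex of `Sb` is
adjacent to a vertex of `Ss`. -/
theorem stmt1 {S : Type*} [Fintype S] (Γ : SimpleGraph S) (hacyc : Γ.IsAcyclic)
    (σ : Equiv.Perm S) (hσ : ∀ x y : S, Γ.Adj (σ x) (σ y) ↔ Γ.Adj x y)
    (a : ℕ) (r : ℕ → S)
    (hadj : ∀ j : ℕ, 1 ≤ j → j < a → Γ.Adj (r j) (r (j + 1)))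
    (horb : ∀ s : S, ∃! j : ℕ, 1 ≤ j ∧ j ≤ a ∧ ∃ m : ℤ, (σ ^ m) (r j) = s)
    (i : ℕ) (hi1 : 1 ≤ i) (hi2 : i ≤ a + 1)
    (Sb Sm Ss : Set S)
    (hSb : Sb = {s | ∃ j : ℕ, i ≤ j ∧ j ≤ a ∧ ∃ m : ℤ, (σ ^ m) (r j) = s})
    (hSm : Sm = {s | 2 ≤ i ∧ ∃ m : ℤ, (σ ^ m) (r (i - 1)) = s})
    (hSs : Ss = Set.univ \ (Sb ∪ Sm)) :
    (Set.univ = Sb ∪ Sm ∪ Ss ∧ Disjoint Sb Sm ∧ Disjoint Sb Ss ∧ Disjoint Sm Ss) ∧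
    (σ '' Sb = Sb ∧ σ '' Sm = Sm ∧ σ '' Ss = Ss) ∧
    (∀ x ∈ Sb, ∀ y ∈ Ss, ¬ Γ.Adj x y) :=
  stmt1_general Γ hacyc σ hσ a r hadj horb i Sb Sm Ss hSb hSm hSs
end

section
/- Fix an odd prime power q. Let f ∈ F_{q²}[λ] be monic and self-reciprocal. Assume there is a unique monic irreducible self-reciprocal polynomial Q_0 ∈ F_{q²}[λ] such that the multiplicity m_{Q_0}(f) of Q_0 in f is odd, and let m be an odd integer with 1 ≤ m ≤ m_{Q_0}(f). Then the square of the number of monic polynomials U ∈ F_{q²}[λ] satisfying U·U* = f/Q_0^m equals the product of (1 + m_Q(f)) over all monic irreducible polynomials Q ∈ F_{q²}[λ] with Q(0) ≠ 0, Q ≠ Q*, and Q dividing f. -/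
/-- The polynomial obtained by applying `x ↦ x^q` to the coefficients of `f`. -/
noncomputable def frobPoly {F : Type*} [Semiring F] (q : ℕ) (f : Polynomial F) :
    Polynomial F :=
  f.sum fun n a => Polynomial.C (a ^ q) * Polynomial.X ^ n

/-- The reciprocal polynomial `f*(λ) = (f(0)^σ)⁻¹ · λ^(deg f) · f^σ(1/λ)` of a
polynomial over `F_{q²}`, where `σ : x ↦ x^q` is the `q`-power Frobenius. -/
noncomputable def recip2 {F : Type*} [Field F] (q : ℕ) (f : Polynomial F) : Polynomial F :=
  Polynomial.C ((f.coeff 0 ^ q)⁻¹) * (frobPoly q f).reverse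

/-!
Factor `U` into monic irreducibles. The twisted reciprocal `P ↦ P*` is multiplicative and
permutes the monic irreducible polynomials with nonzero constant term, so with `g = f / Q₀ ^ m`
the equation `U * U* = g` amounts to choosing multiplicities `c P` with `c P + c P* = m_P(g)` for
every such `P`. A self-reciprocal `P` forces `c P = m_P(g) / 2`, which is possible because
removing an odd power of `Q₀` leaves every self-reciprocal multiplicity even; each pair
`{P, P*}` with `P ≠ P*` leaves `1 + m_P(g) = 1 + m_P(f)` free choices. Squaring the resulting
product over pairs gives the product over all non-self-reciprocal `P`.
-/

open Polynomial UniqueFactorizationMonoid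

section Reciprocal

variable {F : Type*} [Field F] {q : ℕ} {φ : F →+* F}

lemma frobPoly_eq_map (hφ : ∀ x, φ x = x ^ q) (f : F[X]) : frobPoly q f = f.map φ := by
  rw [frobPoly, Polynomial.map, eval₂_eq_sum]
  simp only [RingHom.comp_apply, hφ]

lemma recip2_eq_C_mul_reverse (hφ : ∀ x, φ x = x ^ q) (f : F[X]) :
    recip2 q f = C (φ (f.coeff 0))⁻¹ * (f.map φ).reverse := by
  rw [recip2, frobPoly_eq_map hφ, hφ]

lemma recip2_mul (hφ : ∀ x, φ x = x ^ q) (a b : F[X]) :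
    recip2 q (a * b) = recip2 q a * recip2 q b := by
  simp only [recip2_eq_C_mul_reverse hφ, Polynomial.map_mul, reverse_mul_of_domain,
    mul_coeff_zero, map_mul, mul_inv]
  ring

lemma recip2_one (hφ : ∀ x, φ x = x ^ q) : recip2 q (1 : F[X]) = 1 := by
  rw [recip2_eq_C_mul_reverse hφ, Polynomial.map_one, ← C_1, reverse_C]
  simp

noncomputable def recip2Hom (hφ : ∀ x, φ x = x ^ q) : F[X] →* F[X] where
  toFun := recip2 q
  map_one' := recip2_one hφ
  map_mul' := recip2_mul hφ

lemma recip2_pow (hφ : ∀ x, φ x = x ^ q) (f : F[X]) (k : ℕ) :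
    recip2 q (f ^ k) = recip2 q f ^ k :=
  map_pow (recip2Hom hφ) f k

lemma recip2_monic (hφ : ∀ x, φ x = x ^ q) {f : F[X]} (h0 : f.coeff 0 ≠ 0) :
    (recip2 q f).Monic := by
  have hφ0 : (f.map φ).coeff 0 ≠ 0 := by simpa using h0
  rw [Monic, recip2_eq_C_mul_reverse hφ, leadingCoeff_mul, leadingCoeff_C, reverse_leadingCoeff,
    trailingCoeff_eq_coeff_zero hφ0, coeff_map]
  exact inv_mul_cancel₀ (by simpa using h0)

lemma recip2_natDegree (hφ : ∀ x, φ x = x ^ q) {f : F[X]} (h0 : f.coeff 0 ≠ 0) :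
    (recip2 q f).natDegree = f.natDegree := by
  have hφ0 : (f.map φ).coeff 0 ≠ 0 := by simpa using h0
  rw [recip2_eq_C_mul_reverse hφ, natDegree_C_mul (by simpa using h0), reverse_natDegree,
    natTrailingDegree_eq_zero.mpr (Or.inr hφ0), Nat.sub_zero,
    natDegree_map_eq_of_injective φ.injective]

lemma recip2_coeff_zero_ne_zero (hφ : ∀ x, φ x = x ^ q) {f : F[X]} (h0 : f.coeff 0 ≠ 0) :
    (recip2 q f).coeff 0 ≠ 0 := by
  rw [recip2_eq_C_mul_reverse hφ, coeff_C_mul, coeff_zero_reverse,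
    leadingCoeff_map_of_injective φ.injective]
  simpa [h0] using fun hf : f = 0 => h0 (by simp [hf])

lemma coeff_zero_ne_zero_of_dvd {P g : F[X]} (hP : P ∣ g) (hg : g.coeff 0 ≠ 0) :
    P.coeff 0 ≠ 0 := by
  obtain ⟨r, rfl⟩ := hP
  exact left_ne_zero_of_mul (by rwa [← mul_coeff_zero])

lemma reverse_reverse_of_coeff_zero_ne_zero {f : F[X]} (h0 : f.coeff 0 ≠ 0) :
    f.reverse.reverse = f := by
  have hrev : ∀ g : F[X], g.coeff 0 ≠ 0 → g.reverse = g.mirror := fun g hg => by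
    rw [mirror, natTrailingDegree_eq_zero.mpr (Or.inr hg), pow_zero, mul_one]
  have hf : f ≠ 0 := fun h => h0 (by simp [h])
  have h0' : f.reverse.coeff 0 ≠ 0 := by rwa [coeff_zero_reverse, leadingCoeff_ne_zero]
  rw [hrev _ h0', hrev f h0, mirror_mirror]

lemma reverse_map {f : F[X]} : (f.map φ).reverse = f.reverse.map φ := by
  ext n
  rw [coeff_reverse, natDegree_map_eq_of_injective φ.injective, coeff_map, coeff_map,
    coeff_reverse]

lemma recip2_recip2 (hφ : ∀ x, φ x = x ^ q) (hφφ : Function.Involutive φ) {f : F[X]}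
    (hf : f.Monic) (h0 : f.coeff 0 ≠ 0) : recip2 q (recip2 q f) = f := by
  have hmap : (recip2 q f).map φ = C (f.coeff 0)⁻¹ * f.reverse := by
    rw [recip2_eq_C_mul_reverse hφ, Polynomial.map_mul, map_C, reverse_map, Polynomial.map_map,
      map_inv₀, hφφ, (RingHom.ext hφφ : φ.comp φ = RingHom.id F), Polynomial.map_id]
  have hcoeff : (recip2 q f).coeff 0 = (φ (f.coeff 0))⁻¹ := by
    rw [recip2_eq_C_mul_reverse hφ, coeff_C_mul, coeff_zero_reverse,
      leadingCoeff_map_of_injective φ.injective, hf.leadingCoeff, map_one, mul_one]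
  rw [recip2_eq_C_mul_reverse hφ (recip2 q f), hmap, hcoeff, map_inv₀ φ, hφφ, inv_inv,
    reverse_mul_of_domain, reverse_C, reverse_reverse_of_coeff_zero_ne_zero h0, ← mul_assoc,
    ← C_mul, mul_inv_cancel₀ h0, C_1, one_mul]

lemma irreducible_recip2 (hφ : ∀ x, φ x = x ^ q) (hφφ : Function.Involutive φ) {P : F[X]}
    (hP : P.Monic) (h0 : P.coeff 0 ≠ 0) (hirr : Irreducible P) : Irreducible (recip2 q P) := by
  have hunit : ∀ a : F[X], a.coeff 0 ≠ 0 → (IsUnit (recip2 q a) ↔ IsUnit a) := fun a ha => by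
    have ha' : a ≠ 0 := fun h => ha (by simp [h])
    have hra : recip2 q a ≠ 0 := (recip2_monic hφ ha).ne_zero
    rw [isUnit_iff_degree_eq_zero, isUnit_iff_degree_eq_zero, degree_eq_natDegree ha',
      degree_eq_natDegree hra, recip2_natDegree hφ ha]
  refine ⟨(hunit P h0).not.mpr hirr.not_isUnit, fun a b hab => ?_⟩
  have hab0 : a.coeff 0 * b.coeff 0 ≠ 0 := by
    rw [← mul_coeff_zero, ← hab]
    exact recip2_coeff_zero_ne_zero hφ h0
  have hPab : P = recip2 q a * recip2 q b := by
    rw [← recip2_mul hφ, ← hab, recip2_recip2 hφ hφφ hP h0]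
  rw [← hunit a (left_ne_zero_of_mul hab0), ← hunit b (right_ne_zero_of_mul hab0)]
  exact hirr.isUnit_or_isUnit hPab

end Reciprocal

section Splittings

open Function

variable {α : Type*} {ι : α → α}

-- For `w` the multiplicities of the irreducible factors of `g`, these are the multiplicity
-- functions of the monic `U` with `U * U* = g`.
def splittings (ι : α → α) (w : α → ℕ) : Set (α → ℕ) := {c | ∀ x, c x + c (ι x) = w x}

lemma Multiset.count_map_of_involutive [DecidableEq α] (hι : Involutive ι) (s : Multiset α)
    (x : α) : (s.map ι).count x = s.count (ι x) := by
  simpa only [hι x] using Multiset.count_map_eq_count' ι s hι.injective (ι x)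

lemma Multiset.add_map_eq_iff [DecidableEq α] (hι : Involutive ι) {s t : Multiset α} :
    s + s.map ι = t ↔ ∀ x, s.count x + s.count (ι x) = t.count x := by
  simp only [Multiset.ext, Multiset.count_add, Multiset.count_map_of_involutive hι]

noncomputable def multisetEquivSplittings [DecidableEq α] (hι : Involutive ι) (t : Multiset α) :
    {s : Multiset α // s + s.map ι = t} ≃ splittings ι (fun x => t.count x) where
  toFun s := ⟨fun x => s.1.count x, (Multiset.add_map_eq_iff hι).mp s.2⟩
  invFun c := ⟨Finsupp.toMultiset (Finsupp.ofSupportFinite c.1 <|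
      t.toFinset.finite_toSet.subset fun x hx => by
        have : c.1 x + c.1 (ι x) = t.count x := c.2 x
        simp only [Function.mem_support] at hx
        simp only [Finset.mem_coe, Multiset.mem_toFinset, ← Multiset.count_ne_zero]
        omega),
    (Multiset.add_map_eq_iff hι).mpr fun x => by
      simpa only [Finsupp.count_toMultiset, Finsupp.ofSupportFinite_coe] using c.2 x⟩
  left_inv s := Subtype.ext <| Multiset.ext.mpr fun x => by
    simp [Finsupp.count_toMultiset, Finsupp.ofSupportFinite_coe]
  right_inv c := Subtype.ext <| funext fun x => by
    simp [Finsupp.count_toMultiset, Finsupp.ofSupportFinite_coe]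

noncomputable def splittingsEquivProd {S : Set α} (hS : ∀ x, ι x ∈ S ↔ x ∈ S) (w : α → ℕ) :
    splittings ι w ≃ splittings ι (S.indicator w) × splittings ι (Sᶜ.indicator w) where
  toFun c := (⟨S.indicator c.1, fun x => by
      by_cases hx : x ∈ S <;> simp [hS, hx, c.2 x]⟩,
    ⟨Sᶜ.indicator c.1, fun x => by
      by_cases hx : x ∈ S <;> simp [hS, hx, c.2 x]⟩)
  invFun c := ⟨c.1.1 + c.2.1, fun x => by
    have h₁ := c.1.2 x
    have h₂ := c.2.2 x
    simp only [Pi.add_apply] at *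
    rw [← Set.indicator_self_add_compl_apply S w x]
    omega⟩
  left_inv c := Subtype.ext (Set.indicator_self_add_compl S c.1)
  right_inv c := by
    have h₁ : ∀ x ∉ S, c.1.1 x = 0 := fun x hx => by
      have := c.1.2 x
      simp only [Set.indicator_of_notMem hx] at this
      omega
    have h₂ : ∀ x ∈ S, c.2.1 x = 0 := fun x hx => by
      have := c.2.2 x
      simp only [Set.indicator_of_notMem (Set.notMem_compl_iff.mpr hx)] at this
      omega
    ext x <;> by_cases hx : x ∈ S <;> simp [hx, h₁, h₂]

open Classical in
noncomputable def splittingFactor (ι : α → α) (w : α → ℕ) (x : α) : ℕ :=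
  if ι x = x then 1 else 1 + w x

lemma card_splittings_sq_of_fixed (hι : Involutive ι) {w : α → ℕ} (hw : ∀ x, ι x ≠ x → w x = 0)
    (heven : ∀ x, ι x = x → Even (w x)) :
    Nat.card (splittings ι w) ^ 2 = ∏ᶠ x, splittingFactor ι w x := by
  have hsplit : splittings ι w = {fun x => w x / 2} := by
    ext c
    simp only [splittings, Set.mem_ofPred_eq, Set.mem_singleton_iff]
    refine ⟨fun hc => funext fun x => ?_, fun hc x => ?_⟩ <;> by_cases hx : ι x = x
    · have := hc x; rw [hx] at this; omega
    · have := hc x; have := hw x hx; omega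
    · obtain ⟨k, hk⟩ := heven x hx; simp only [hc, hx]; omega
    · simp only [hc, hw x hx, hw (ι x) (by rwa [hι x, ne_comm])]
  rw [hsplit, Nat.card_unique, finprod_eq_one_of_forall_eq_one fun x => ?_]
  · rfl
  by_cases hx : ι x = x <;> simp [splittingFactor, hx, hw]

lemma card_splittings_sq_of_pair (hι : Involutive ι) {a : α} (ha : ι a ≠ a) {w : α → ℕ}
    (hw : ∀ x, x ≠ a → x ≠ ι a → w x = 0) (hsymm : w (ι a) = w a) :
    Nat.card (splittings ι w) ^ 2 = ∏ᶠ x, splittingFactor ι w x := by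
  classical
  have hιx : ∀ x, x ≠ a → x ≠ ι a → ι x ≠ a ∧ ι x ≠ ι a := fun x hxa hxι =>
    ⟨fun h => hxι (by rw [← h, hι]), fun h => hxa (hι.injective h)⟩
  have e : splittings ι w ≃ Fin (w a + 1) :=
    { toFun c := ⟨c.1 a, by have := c.2 a; omega⟩
      invFun i := ⟨fun x => if x = a then i else if x = ι a then w a - i else 0, fun x => by
        by_cases hxa : x = a
        · subst hxa; simp [ha]; omega
        by_cases hxι : x = ι a
        · subst hxι; simp [ha, hι a, hsymm]; omega
        simp [hxa, hxι, hιx x hxa hxι, hw x hxa hxι]⟩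
      left_inv c := Subtype.ext <| funext fun x => by
        by_cases hxa : x = a
        · simp [hxa]
        by_cases hxι : x = ι a
        · have := c.2 a; subst hxι; simp [ha]; omega
        have := c.2 x; have := hw x hxa hxι; simp [hxa, hxι]; omega
      right_inv i := by simp }
  have hsupp : Function.mulSupport (splittingFactor ι w) ⊆ ({a, ι a} : Finset α) := fun x hx => by
    by_contra hmem
    simp only [Finset.coe_insert, Finset.coe_singleton, Set.mem_insert_iff,
      Set.mem_singleton_iff, not_or] at hmem
    simp [splittingFactor, hw x hmem.1 hmem.2] at hx
  rw [Nat.card_congr e, Nat.card_eq_fintype_card, Fintype.card_fin,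
    finprod_eq_prod_of_mulSupport_subset _ hsupp, Finset.prod_pair ha.symm]
  simp [splittingFactor, ha, ha.symm, hι a, hsymm]
  ring

lemma mulSupport_splittingFactor_subset (w : α → ℕ) :
    Function.mulSupport (splittingFactor ι w) ⊆ Function.support w := fun x hx => by
  by_contra hw
  simp [splittingFactor, Function.notMem_support.mp hw] at hx

lemma splittingFactor_eq_mul_indicator (S : Set α) (w : α → ℕ) (x : α) : splittingFactor ι w x =
      splittingFactor ι (S.indicator w) x * splittingFactor ι (Sᶜ.indicator w) x := by
  by_cases hx : x ∈ S <;> simp [splittingFactor, hx]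

theorem card_splittings_sq (hι : Involutive ι) {w : α → ℕ} (hfin : (Function.support w).Finite)
    (hsymm : ∀ x, w (ι x) = w x) (heven : ∀ x, ι x = x → Even (w x)) :
    Nat.card (splittings ι w) ^ 2 = ∏ᶠ x, splittingFactor ι w x := by
  classical
  obtain ⟨V, hV⟩ : ∃ V : Finset α, Function.support w ⊆ V := ⟨hfin.toFinset, by simp⟩
  induction V using Finset.induction_on generalizing w with
  | empty =>
    refine card_splittings_sq_of_fixed hι (fun x _ => ?_) heven
    simpa using Set.notMem_subset hV (Finset.notMem_empty x)
  | insert a V _ ih =>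
    set S : Set α := {a, ι a}
    have hS : ∀ x, ι x ∈ S ↔ x ∈ S := fun x => by
      simp only [S, Set.mem_insert_iff, Set.mem_singleton_iff, hι.injective.eq_iff]
      rw [← hι.eq_iff, or_comm]
    have hSc : ∀ x, ι x ∈ Sᶜ ↔ x ∈ Sᶜ := fun x => (hS x).not
    have hfinite : ∀ T : Set α, (Function.mulSupport (splittingFactor ι (T.indicator w))).Finite :=
      fun T => (insert a V).finite_toSet.subset <| (mulSupport_splittingFactor_subset _).trans <|
        by rw [Set.support_indicator]; exact Set.inter_subset_right.trans hV
    have horbit : Nat.card (splittings ι (S.indicator w)) ^ 2 =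
        ∏ᶠ x, splittingFactor ι (S.indicator w) x := by
      by_cases hfix : ι a = a
      · refine card_splittings_sq_of_fixed hι (fun x hx => ?_) (fun x hx => ?_)
        · refine Set.indicator_of_notMem (fun hxS => hx ?_) w
          rcases hxS with rfl | rfl <;> simp [hfix]
        · by_cases hxS : x ∈ S
          · simpa [hxS] using heven x hx
          · simp [hxS]
      · refine card_splittings_sq_of_pair hι hfix (fun x hxa hxι => ?_) ?_
        · exact Set.indicator_of_notMem (by simp [S, hxa, hxι]) w
        · simp [S, hsymm]
    have hrest : Nat.card (splittings ι (Sᶜ.indicator w)) ^ 2 =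
        ∏ᶠ x, splittingFactor ι (Sᶜ.indicator w) x := by
      have hsupp : Function.support (Sᶜ.indicator w) ⊆ V := fun x hx => by
        rw [Function.mem_support, Set.indicator_apply_ne_zero] at hx
        have := hV hx.2
        simp only [Finset.coe_insert, Set.mem_insert_iff] at this
        exact this.resolve_left fun h => hx.1 (by simp [S, h])
      refine ih (V.finite_toSet.subset hsupp) (fun x => ?_) (fun x hx => ?_) hsupp
      · simp [Set.indicator_apply, hSc, hsymm]
      · by_cases hxS : x ∈ Sᶜ
        · simpa [hxS] using heven x hx
        · simp [hxS]
    rw [Nat.card_congr (splittingsEquivProd hS w), Nat.card_prod, mul_pow, horbit, hrest,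
      ← finprod_mul_distrib (hfinite S) (hfinite Sᶜ)]
    exact finprod_congr fun x => (splittingFactor_eq_mul_indicator S w x).symm

end Splittings

section Factorization

variable {F : Type*} [Field F] [DecidableEq F] {q : ℕ} {φ : F →+* F}

lemma Polynomial.Monic.prod_normalizedFactors {U : F[X]} (hU : U.Monic) :
    (normalizedFactors U).prod = U := by
  rw [prod_normalizedFactors_eq hU.ne_zero, hU.normalize_eq_self]

lemma normalizedFactors_prod_of_monic_irreducible {s : Multiset F[X]}
    (hs : ∀ P ∈ s, P.Monic ∧ Irreducible P) : normalizedFactors s.prod = s := by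
  rw [normalizedFactors_prod_eq s fun P hP => (hs P hP).2,
    Multiset.map_congr rfl fun P hP => (hs P hP).1.normalize_eq_self, Multiset.map_id']

lemma monic_irreducible_coeff_ne_zero_of_mem_normalizedFactors {g P : F[X]} (hg0 : g.coeff 0 ≠ 0)
    (hP : P ∈ normalizedFactors g) : P.Monic ∧ Irreducible P ∧ P.coeff 0 ≠ 0 := by
  have hirr := irreducible_of_normalized_factor P hP
  refine ⟨?_, hirr, coeff_zero_ne_zero_of_dvd (dvd_of_mem_normalizedFactors hP) hg0⟩
  rw [← normalize_normalized_factor P hP]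
  exact monic_normalize hirr.ne_zero

lemma multiplicity_pow_mul_eq {Q0 g P : F[X]} (hQ0 : Q0.Monic) (hQ0irr : Irreducible Q0)
    (hg : g ≠ 0) (hP : P.Monic) (hPirr : Irreducible P) (m : ℕ) :
    multiplicity P (Q0 ^ m * g) = (if Q0 = P then m else 0) + (normalizedFactors g).count P := by
  rw [multiplicity_eq_count_normalizedFactors hPirr (mul_ne_zero (pow_ne_zero m hQ0.ne_zero) hg),
    hP.normalize_eq_self, normalizedFactors_mul (pow_ne_zero m hQ0.ne_zero) hg,
    hQ0irr.normalizedFactors_pow, hQ0.normalize_eq_self, Multiset.count_add,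
    Multiset.count_replicate]

-- `recip2 q`, extended by the identity to an involution of all of `F[X]`, so that
-- multiplicities of factors transform by `Multiset.count_map_of_involutive`.
open Classical in
noncomputable def recipInvol (q : ℕ) (P : F[X]) : F[X] :=
  if P.Monic ∧ P.coeff 0 ≠ 0 then recip2 q P else P

lemma recipInvol_of_monic {P : F[X]} (hP : P.Monic) (h0 : P.coeff 0 ≠ 0) :
    recipInvol q P = recip2 q P := by
  simp [recipInvol, hP, h0]

lemma recipInvol_involutive (hφ : ∀ x, φ x = x ^ q) (hφφ : Function.Involutive φ) :
    Function.Involutive (recipInvol (F := F) q) := by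
  intro P
  by_cases hP : P.Monic ∧ P.coeff 0 ≠ 0
  · rw [recipInvol_of_monic hP.1 hP.2, recipInvol_of_monic (recip2_monic hφ hP.2)
      (recip2_coeff_zero_ne_zero hφ hP.2), recip2_recip2 hφ hφφ hP.1 hP.2]
  · have hfix : recipInvol q P = P := if_neg hP
    rw [hfix, hfix]

lemma recip2_multiset_prod (hφ : ∀ x, φ x = x ^ q) {s : Multiset F[X]}
    (hs : ∀ P ∈ s, P.Monic ∧ P.coeff 0 ≠ 0) :
    recip2 q s.prod = (s.map (recipInvol q)).prod := by
  rw [Multiset.map_congr rfl fun P hP => recipInvol_of_monic (hs P hP).1 (hs P hP).2]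
  exact map_multiset_prod (recip2Hom hφ) s

lemma normalizedFactors_recip2 (hφ : ∀ x, φ x = x ^ q) (hφφ : Function.Involutive φ) {U : F[X]}
    (hU : U.Monic) (hU0 : U.coeff 0 ≠ 0) :
    normalizedFactors (recip2 q U) = (normalizedFactors U).map (recipInvol q) := by
  have hfac := fun P => monic_irreducible_coeff_ne_zero_of_mem_normalizedFactors (P := P) hU0
  conv_lhs => rw [← hU.prod_normalizedFactors,
    recip2_multiset_prod hφ fun P hP => ⟨(hfac P hP).1, (hfac P hP).2.2⟩]
  refine normalizedFactors_prod_of_monic_irreducible fun P hP => ?_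
  obtain ⟨P, hPU, rfl⟩ := Multiset.mem_map.mp hP
  obtain ⟨hmon, hirr, h0⟩ := hfac P hPU
  rw [recipInvol_of_monic hmon h0]
  exact ⟨recip2_monic hφ h0, irreducible_recip2 hφ hφφ hmon h0 hirr⟩

noncomputable def mulRecipEquiv (hφ : ∀ x, φ x = x ^ q) (hφφ : Function.Involutive φ)
    {g : F[X]} (hg : g.Monic) (hg0 : g.coeff 0 ≠ 0) :
    {U : F[X] | U.Monic ∧ U * recip2 q U = g} ≃
      {s : Multiset F[X] // s + s.map (recipInvol q) = normalizedFactors g} where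
  toFun U := ⟨normalizedFactors U.1, by
    obtain ⟨U, hU, hUg⟩ := U
    have hU0 : U.coeff 0 ≠ 0 := coeff_zero_ne_zero_of_dvd (Dvd.intro _ hUg) hg0
    subst hUg
    rw [normalizedFactors_mul hU.ne_zero (recip2_monic hφ hU0).ne_zero,
      normalizedFactors_recip2 hφ hφφ hU hU0]⟩
  invFun s := by
    have hfac : ∀ P ∈ s.1, P.Monic ∧ P.coeff 0 ≠ 0 := fun P hP => by
      obtain ⟨hmon, -, h0⟩ := monic_irreducible_coeff_ne_zero_of_mem_normalizedFactors hg0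
        (s.2 ▸ Multiset.mem_add.mpr (Or.inl hP))
      exact ⟨hmon, h0⟩
    refine ⟨s.1.prod, ?_, ?_⟩
    · simpa using monic_multiset_prod_of_monic s.1 id fun P hP => (hfac P hP).1
    · rw [recip2_multiset_prod hφ hfac, ← Multiset.prod_add, s.2, hg.prod_normalizedFactors]
  left_inv U := Subtype.ext U.2.1.prod_normalizedFactors
  right_inv s := Subtype.ext <| normalizedFactors_prod_of_monic_irreducible fun P hP =>
    (monic_irreducible_coeff_ne_zero_of_mem_normalizedFactors hg0
      (s.2 ▸ Multiset.mem_add.mpr (Or.inl hP))).imp_right And.left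

lemma even_count_normalizedFactors_of_recipInvol_eq {Q0 g P : F[X]} (hQ0 : Q0.Monic)
    (hQ0irr : Irreducible Q0) (hg0 : g.coeff 0 ≠ 0) {m : ℕ} (hm : Odd m)
    (hQ0odd : Odd (multiplicity Q0 (Q0 ^ m * g)))
    (huniq : ∀ Q : F[X], Q.Monic → Irreducible Q → Q.coeff 0 ≠ 0 → recip2 q Q = Q →
      Odd (multiplicity Q (Q0 ^ m * g)) → Q = Q0)
    (hfix : recipInvol q P = P) : Even ((normalizedFactors g).count P) := by
  by_cases hPg : P ∈ normalizedFactors g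
  swap
  · simp [Multiset.count_eq_zero_of_notMem hPg]
  obtain ⟨hP, hPirr, hP0⟩ := monic_irreducible_coeff_ne_zero_of_mem_normalizedFactors hg0 hPg
  have hg : g ≠ 0 := fun h => hg0 (by simp [h])
  have hmult := multiplicity_pow_mul_eq hQ0 hQ0irr hg hP hPirr m
  by_cases hPQ : Q0 = P
  · subst hPQ
    rw [if_pos rfl] at hmult
    rw [hmult] at hQ0odd
    exact (Nat.odd_add.mp hQ0odd).mp hm
  · rw [if_neg hPQ, zero_add] at hmult
    rw [recipInvol_of_monic hP hP0] at hfix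
    rw [← hmult, ← Nat.not_odd_iff_even]
    exact fun hodd => hPQ (huniq P hP hPirr hP0 hfix hodd).symm

end Factorization

lemma exists_ringHom_pow_involutive {F : Type*} [Field F] [Fintype F] {p n : ℕ} (hp : p.Prime)
    (hcard : Fintype.card F = (p ^ n) ^ 2) :
    ∃ φ : F →+* F, (∀ x, φ x = x ^ p ^ n) ∧ Function.Involutive φ := by
  have := Fact.mk hp
  have : CharP F p := charP_of_card_eq_prime_pow (by rw [hcard, ← pow_mul])
  refine ⟨iterateFrobenius F p n, fun x => iterateFrobenius_def p n x, fun x => ?_⟩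
  rw [iterateFrobenius_def, iterateFrobenius_def, ← pow_mul, ← sq, ← hcard, FiniteField.pow_card]

lemma finprod_splittingFactor_eq {F : Type*} [Field F] [DecidableEq F] {q : ℕ} {f g : F[X]}
    (hgf : g ∣ f) (hg0 : g.coeff 0 ≠ 0)
    (hmult : ∀ Q : F[X], Q.Monic → Irreducible Q → Q.coeff 0 ≠ 0 → Q ≠ recip2 q Q →
      multiplicity Q f = (normalizedFactors g).count Q) :
    ∏ᶠ Q, splittingFactor (recipInvol q) (fun Q => (normalizedFactors g).count Q) Q =
      ∏ᶠ Q ∈ {Q : F[X] | Q.Monic ∧ Irreducible Q ∧ Q.coeff 0 ≠ 0 ∧ Q ≠ recip2 q Q ∧ Q ∣ f},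
        (1 + multiplicity Q f) := by
  rw [finprod_mem_def]
  refine finprod_congr fun Q => ?_
  by_cases hQ : Q ∈ {Q : F[X] | Q.Monic ∧ Irreducible Q ∧ Q.coeff 0 ≠ 0 ∧ Q ≠ recip2 q Q ∧ Q ∣ f}
  · rw [Set.mulIndicator_of_mem hQ]
    obtain ⟨hmon, hirr, h0, hrecip, -⟩ := hQ
    rw [splittingFactor, recipInvol_of_monic hmon h0,
      if_neg (Ne.symm hrecip), hmult Q hmon hirr h0 hrecip]
  · rw [Set.mulIndicator_of_notMem hQ, splittingFactor]
    split_ifs with hfix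
    · rfl
    · suffices Q ∉ normalizedFactors g by simp [this]
      intro hQg
      obtain ⟨hmon, hirr, h0⟩ := monic_irreducible_coeff_ne_zero_of_mem_normalizedFactors hg0 hQg
      rw [recipInvol_of_monic hmon h0] at hfix
      exact hQ ⟨hmon, hirr, h0, Ne.symm hfix, (dvd_of_mem_normalizedFactors hQg).trans hgf⟩

theorem stmt9_general (q : ℕ) (hq : ∃ p n : ℕ, p.Prime ∧ 0 < n ∧ q = p ^ n)
    {F : Type*} [Field F] [Fintype F] (hcard : Fintype.card F = q ^ 2)
    (f : Polynomial F) (hmonic : f.Monic) (h0 : f.coeff 0 ≠ 0) (hsr : recip2 q f = f)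
    (Q0 : Polynomial F) (hQ0monic : Q0.Monic) (hQ0irr : Irreducible Q0)
    (hQ0sr : recip2 q Q0 = Q0)
    (hQ0odd : Odd (multiplicity Q0 f))
    (huniq : ∀ Q : Polynomial F, Q.Monic → Irreducible Q → Q.coeff 0 ≠ 0 →
      recip2 q Q = Q → Odd (multiplicity Q f) → Q = Q0)
    (m : ℕ) (hmodd : Odd m) (hm2 : m ≤ multiplicity Q0 f) :
    (Nat.card {U : Polynomial F | U.Monic ∧ U * recip2 q U = f / Q0 ^ m}) ^ 2 =
      ∏ᶠ Q ∈ {Q : Polynomial F |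
          Q.Monic ∧ Irreducible Q ∧ Q.coeff 0 ≠ 0 ∧ Q ≠ recip2 q Q ∧ Q ∣ f},
        (1 + multiplicity Q f) := by
  classical
  obtain ⟨p, n, hp, -, rfl⟩ := hq
  obtain ⟨φ, hφ, hφφ⟩ := exists_ringHom_pow_involutive hp hcard
  obtain ⟨g, rfl⟩ : Q0 ^ m ∣ f := pow_dvd_of_le_multiplicity hm2
  have hg : g.Monic := (hQ0monic.pow m).of_mul_monic_left hmonic
  have hg0 : g.coeff 0 ≠ 0 := coeff_zero_ne_zero_of_dvd (dvd_mul_left g _) h0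
  have hgsr : recip2 (p ^ n) g = g := by
    rw [recip2_mul hφ, recip2_pow hφ, hQ0sr] at hsr
    exact mul_left_cancel₀ (pow_ne_zero m hQ0monic.ne_zero) hsr
  set t := normalizedFactors g
  have hι := recipInvol_involutive (F := F) hφ hφφ
  have hsymm : ∀ P, t.count (recipInvol (p ^ n) P) = t.count P := fun P => by
    rw [← Multiset.count_map_of_involutive hι, ← normalizedFactors_recip2 hφ hφφ hg hg0, hgsr]
  have heven : ∀ P, recipInvol (p ^ n) P = P → Even (t.count P) := fun P =>
    even_count_normalizedFactors_of_recipInvol_eq hQ0monic hQ0irr hg0 hmodd hQ0odd huniq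
  rw [mul_div_cancel_left₀ _ (pow_ne_zero m hQ0monic.ne_zero),
    Nat.card_congr ((mulRecipEquiv hφ hφφ hg hg0).trans (multisetEquivSplittings hι t)),
    card_splittings_sq hι (t.toFinset.finite_toSet.subset fun P hP => by simpa using hP) hsymm
      heven]
  refine finprod_splittingFactor_eq (dvd_mul_left g _) hg0 fun Q hQ hirr _ hrecip => ?_
  rw [multiplicity_pow_mul_eq hQ0monic hQ0irr hg.ne_zero hQ hirr,
    if_neg (by rintro rfl; exact hrecip hQ0sr.symm), zero_add]

/-- Let `f ∈ F_{q²}[λ]` (with `q` an odd prime power) be monic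
self-reciprocal.  Assume there is a unique monic irreducible self-reciprocal
`Q₀ ∈ F_{q²}[λ]` whose multiplicity `m_{Q₀}(f)` in `f` is odd, and let `m` be
odd with `1 ≤ m ≤ m_{Q₀}(f)`.  Then the square of the number of monic `U` with
`U·U* = f/Q₀^m` equals `∏ (1 + m_Q(f))` over all monic irreducible
`Q ∈ F_{q²}[λ]` with `Q(0) ≠ 0`, `Q ≠ Q*` and `Q ∣ f`. -/
theorem stmt9 (q : ℕ) (hq : ∃ p n : ℕ, p.Prime ∧ 0 < n ∧ q = p ^ n) (hodd : Odd q)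
    {F : Type*} [Field F] [Fintype F] (hcard : Fintype.card F = q ^ 2)
    (f : Polynomial F) (hmonic : f.Monic) (h0 : f.coeff 0 ≠ 0) (hsr : recip2 q f = f)
    (Q0 : Polynomial F) (hQ0monic : Q0.Monic) (hQ0irr : Irreducible Q0)
    (hQ00 : Q0.coeff 0 ≠ 0) (hQ0sr : recip2 q Q0 = Q0)
    (hQ0odd : Odd (multiplicity Q0 f))
    (huniq : ∀ Q : Polynomial F, Q.Monic → Irreducible Q → Q.coeff 0 ≠ 0 →
      recip2 q Q = Q → Odd (multiplicity Q f) → Q = Q0)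
    (m : ℕ) (hmodd : Odd m) (hm1 : 1 ≤ m) (hm2 : m ≤ multiplicity Q0 f) :
    (Nat.card {U : Polynomial F | U.Monic ∧ U * recip2 q U = f / Q0 ^ m}) ^ 2 =
      ∏ᶠ Q ∈ {Q : Polynomial F |
          Q.Monic ∧ Irreducible Q ∧ Q.coeff 0 ≠ 0 ∧ Q ≠ recip2 q Q ∧ Q ∣ f},
        (1 + multiplicity Q f) :=
  stmt9_general q hq hcard f hmonic h0 hsr Q0 hQ0monic hQ0irr hQ0sr hQ0odd huniq m hmodd hm2
end

section
/- Fix an odd prime power q and let k be an algebraic closure of F_q. Let n' ≥ 0 and let λ ∈ k^× satisfy λ^{q^{2n'+1}} = λ^{-1}. Let Q ∈ F_{q²}[x] be the minimal polynomial of λ over F_{q²} and d := deg Q. Then d divides 2n'+1, the polynomial ∏_{j=0}^{2n'}(x − λ^{q^{2j}}) lies in F_{q²}[x] and equals Q^{(2n'+1)/d}, and Q is self-reciprocal, i.e., the set of roots of Q in k is stable under the map x ↦ x^{-q}. -/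
open Polynomial Function Finset IntermediateField

namespace Polynomial

theorem C_neg_inv_mul_reverse_X_sub_C {K : Type*} [Field K] {b : K} (hb : b ≠ 0) :
    C (-b)⁻¹ * (X - C b).reverse = X - C b⁻¹ := by
  rw [reverse, natDegree_X_sub_C, reflect_sub, reflect_one_X, reflect_C, pow_one, mul_sub,
    mul_one, ← mul_assoc, ← C_mul, inv_neg, neg_mul, inv_mul_cancel₀ hb]
  simp only [map_neg, map_one]
  ring

theorem reverse_prod {R ι : Type*} [CommSemiring R] [NoZeroDivisors R] (s : Finset ι)
    (f : ι → R[X]) : (∏ i ∈ s, f i).reverse = ∏ i ∈ s, (f i).reverse := by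
  classical
  induction s using Finset.induction_on with
  | empty => simpa using reverse_C (1 : R)
  | insert i s hi ih => rw [prod_insert hi, prod_insert hi, reverse_mul_of_domain, ih]

theorem eq_prod_X_sub_C_of_injOn {R ι : Type*} [CommRing R] [IsDomain R] {P : R[X]}
    (hP : P.Monic) {s : Finset ι} {a : ι → R} (ha : Set.InjOn a s)
    (hroot : ∀ i ∈ s, P.IsRoot (a i)) (hdeg : P.natDegree = s.card) :
    P = ∏ i ∈ s, (X - C (a i)) := by
  have hnodup : (s.val.map a).Nodup := s.nodup.map_on fun i hi j hj h => ha hi hj h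
  have hle : s.val.map a ≤ P.roots := (Multiset.le_iff_subset hnodup).mpr fun x hx => by
    obtain ⟨i, hi, rfl⟩ := Multiset.mem_map.mp hx
    exact (mem_roots hP.ne_zero).mpr (hroot i hi)
  have hdvd : ∏ i ∈ s, (X - C (a i)) ∣ P := by
    have : ∏ i ∈ s, (X - C (a i)) = ((s.val.map a).map (fun x => X - C x)).prod := by
      rw [Multiset.map_map]; rfl
    rw [this]
    exact (Multiset.prod_X_sub_C_dvd_iff_le_roots hP.ne_zero _).mpr hle
  refine eq_of_monic_of_dvd_of_natDegree_le (monic_prod_of_monic _ _ fun i _ => monic_X_sub_C _)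
    hP hdvd ?_
  rw [natDegree_prod_of_monic _ _ fun i _ => monic_X_sub_C _, hdeg]
  simp

end Polynomial

theorem frobPoly_eq_map_s14 {R : Type*} [Semiring R] {q : ℕ} (σ : R →+* R) (hσ : ∀ x, σ x = x ^ q)
    (f : R[X]) : frobPoly q f = f.map σ := by
  simp only [frobPoly, Polynomial.map, eval₂_eq_sum, RingHom.comp_apply, hσ]

theorem coeff_frobPoly {R : Type*} [Semiring R] {q : ℕ} (hq : q ≠ 0) (f : R[X]) (n : ℕ) :
    (frobPoly q f).coeff n = f.coeff n ^ q := by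
  rw [frobPoly, Polynomial.sum_def, finsetSum_coeff]
  simp only [coeff_C_mul_X_pow]
  rw [sum_ite_eq f.support n]
  split_ifs with h
  · rfl
  · rw [notMem_support_iff.mp h, zero_pow hq]

theorem map_frobPoly {R S : Type*} [Semiring R] [Semiring S] (φ : R →+* S) {q : ℕ} (hq : q ≠ 0)
    (f : R[X]) : (frobPoly q f).map φ = frobPoly q (f.map φ) := by
  ext n
  rw [coeff_map, coeff_frobPoly hq, coeff_frobPoly hq, coeff_map, map_pow]

theorem map_recip2 {K L : Type*} [Field K] [Field L] (φ : K →+* L) {q : ℕ} (hq : q ≠ 0)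
    (f : K[X]) : (recip2 q f).map φ = recip2 q (f.map φ) := by
  rw [recip2, recip2, Polynomial.map_mul, map_C, reverse, reverse, ← reflect_map,
    ← map_frobPoly φ hq, natDegree_map, coeff_map, map_inv₀, map_pow]

theorem recip2_prod_X_sub_C {K ι : Type*} [Field K] {q : ℕ} (σ : K →+* K)
    (hσ : ∀ x, σ x = x ^ q) (s : Finset ι) {a : ι → K} (ha : ∀ i ∈ s, a i ≠ 0) :
    recip2 q (∏ i ∈ s, (X - C (a i))) = ∏ i ∈ s, (X - C (σ (a i))⁻¹) := by
  have hcoeff : (∏ i ∈ s, (X - C (a i))).coeff 0 ^ q = ∏ i ∈ s, -σ (a i) := by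
    rw [← hσ, coeff_zero_eq_eval_zero, eval_prod, map_prod]
    simp
  rw [recip2, hcoeff, frobPoly_eq_map_s14 σ hσ, Polynomial.map_prod, reverse_prod,
    ← prod_inv_distrib, map_prod, ← prod_mul_distrib]
  refine prod_congr rfl fun i hi => ?_
  rw [Polynomial.map_sub, map_X, map_C]
  exact C_neg_inv_mul_reverse_X_sub_C ((map_ne_zero σ).mpr (ha i hi))

theorem Function.Periodic.prod_range_mul {M : Type*} [CommMonoid M] {g : ℕ → M} {d : ℕ}
    (hg : Periodic g d) (t : ℕ) : ∏ j ∈ range (d * t), g j = (∏ j ∈ range d, g j) ^ t := by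
  induction t with
  | zero => simp
  | succ t ih =>
    rw [Nat.mul_succ, prod_range_add, ih, pow_succ]
    congr 1
    refine prod_congr rfl fun j _ => ?_
    rw [add_comm, mul_comm]
    exact_mod_cast hg.nat_mul t j

theorem pow_pow_two_mul_inv_of_pow_pow_eq_inv {G : Type*} [DivisionMonoid G] {x : G} {q n : ℕ}
    (hx : x ^ q ^ (2 * n + 1) = x⁻¹) (j : ℕ) :
    ((x ^ q ^ (2 * j)) ^ q)⁻¹ = x ^ q ^ (2 * (j + (n + 1))) := by
  rw [← pow_mul, ← pow_succ, ← inv_pow, ← hx, ← pow_mul, ← pow_add]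
  ring_nf

section FiniteField

variable {F k : Type*} [Field F] [Fintype F] [Field k] [Algebra F k]

theorem pow_card_pow_eq_self_iff {x : k} (hx : IsIntegral F x) (j : ℕ) :
    x ^ Fintype.card F ^ j = x ↔ (minpoly F x).natDegree ∣ j := by
  have := adjoin.finiteDimensional hx
  have : Finite F⟮x⟯ := Module.finite_of_finite F
  rw [← adjoin.finrank hx, ← FiniteField.orderOf_frobeniusAlgHom, orderOf_dvd_iff_pow_eq_one]
  have hfrob : ⇑(FiniteField.frobeniusAlgHom F F⟮x⟯ ^ j) = (· ^ Fintype.card F ^ j) := by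
    rw [AlgHom.coe_pow, FiniteField.coe_frobeniusAlgHom, pow_iterate]
  constructor
  · intro h
    refine algHom_ext_of_eq_adjoin F rfl fun y hy => ?_
    rw [Set.mem_singleton_iff] at hy
    subst hy
    apply Subtype.ext
    simpa [hfrob] using h
  · intro h
    simpa [hfrob] using congr(($h (AdjoinSimple.gen F x) : k))

theorem minimalPeriod_pow_card {x : k} (hx : IsIntegral F x) :
    minimalPeriod (· ^ Fintype.card F) x = (minpoly F x).natDegree := by
  have hiff (j : ℕ) : IsPeriodicPt (· ^ Fintype.card F) j x ↔ (minpoly F x).natDegree ∣ j := by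
    rw [IsPeriodicPt, IsFixedPt, pow_iterate, pow_card_pow_eq_self_iff hx]
  exact Nat.dvd_antisymm (isPeriodicPt_iff_minimalPeriod_dvd.mp ((hiff _).mpr dvd_rfl))
    ((hiff _).mp (isPeriodicPt_minimalPeriod _ _))

theorem isRoot_map_minpoly_pow_card_pow (x : k) (j : ℕ) :
    ((minpoly F x).map (algebraMap F k)).IsRoot (x ^ Fintype.card F ^ j) := by
  have := aeval_algHom_apply (FiniteField.frobeniusAlgHom F k ^ j) x (minpoly F x)
  rw [minpoly.aeval, map_zero, AlgHom.coe_pow, FiniteField.coe_frobeniusAlgHom, pow_iterate] at this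
  rwa [IsRoot, eval_map_algebraMap]

theorem map_minpoly_eq_prod_pow_card_pow {x : k} (hx : IsIntegral F x) (c : ℕ) :
    (minpoly F x).map (algebraMap F k) =
      ∏ j ∈ range (minpoly F x).natDegree, (X - C (x ^ Fintype.card F ^ (j + c))) := by
  refine eq_prod_X_sub_C_of_injOn ((minpoly.monic hx).map _) ?_
    (fun j _ => isRoot_map_minpoly_pow_card_pow x (j + c)) (by simp)
  have hx' : x ∈ periodicPts (· ^ Fintype.card F) := by
    rw [← minimalPeriod_pos_iff_mem_periodicPts, minimalPeriod_pow_card hx]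
    exact minpoly.natDegree_pos hx
  have hinj := iterate_injOn_Iio_minimalPeriod (f := (· ^ Fintype.card F))
    (x := (· ^ Fintype.card F)^[c] x)
  rw [minimalPeriod_apply_iterate hx', minimalPeriod_pow_card hx] at hinj
  simp only [pow_iterate] at hinj
  intro i hi j hj h
  refine hinj (by simpa using hi) (by simpa using hj) ?_
  dsimp only at h ⊢
  rwa [← pow_mul, ← pow_mul, ← pow_add, ← pow_add, add_comm c, add_comm c]

end FiniteField

theorem stmt14_general (q : ℕ) (hq : ∃ p m : ℕ, p.Prime ∧ 0 < m ∧ q = p ^ m)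
    {F : Type*} [Field F] [Fintype F] (hcard : Fintype.card F = q ^ 2)
    (k : Type*) [Field k] [Algebra F k] [IsAlgClosure F k]
    (n' : ℕ) (lam : k) (hlam0 : lam ≠ 0)
    (hlam : lam ^ q ^ (2 * n' + 1) = lam⁻¹)
    (Q : Polynomial F) (hQ : Q = minpoly F lam)
    (d : ℕ) (hd : d = Q.natDegree) :
    d ∣ 2 * n' + 1 ∧
    (∏ j ∈ Finset.range (2 * n' + 1), (Polynomial.X - Polynomial.C (lam ^ q ^ (2 * j)))) =
      (Q.map (algebraMap F k)) ^ ((2 * n' + 1) / d) ∧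
    recip2 q Q = Q := by
  obtain ⟨p, m, hp, -, rfl⟩ := hq
  subst hQ hd
  have : Fact p.Prime := ⟨hp⟩
  have : CharP F p := charP_of_card_eq_prime_pow (by rw [hcard, ← pow_mul])
  have : CharP k p := charP_of_injective_algebraMap (algebraMap F k).injective p
  have hx : IsIntegral F lam := Algebra.IsIntegral.isIntegral lam
  have hpow (j : ℕ) : lam ^ (p ^ m) ^ (2 * j) = lam ^ Fintype.card F ^ j := by
    rw [hcard, pow_mul]
  have hM : (minpoly F lam).natDegree ∣ 2 * n' + 1 := by
    rw [← pow_card_pow_eq_self_iff hx, ← hpow, two_mul, pow_add, pow_mul, hlam, inv_pow, hlam,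
      inv_inv]
  refine ⟨hM, ?_, ?_⟩
  · have hper : Periodic (fun j => X - C (lam ^ Fintype.card F ^ j)) (minpoly F lam).natDegree :=
      fun j => by
        dsimp only
        rw [pow_add, mul_comm, pow_mul, (pow_card_pow_eq_self_iff hx _).mpr dvd_rfl]
    simp_rw [hpow, map_minpoly_eq_prod_pow_card_pow hx 0, add_zero, ← hper.prod_range_mul,
      Nat.mul_div_cancel' hM]
  · have hq0 : p ^ m ≠ 0 := pow_ne_zero _ hp.ne_zero
    refine map_injective _ (algebraMap F k).injective ?_
    rw [map_recip2 _ hq0]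
    conv_lhs => rw [map_minpoly_eq_prod_pow_card_pow hx 0]
    rw [recip2_prod_X_sub_C (iterateFrobenius k p m) (fun _ => iterateFrobenius_def ..) _
        (fun j _ => pow_ne_zero _ hlam0), map_minpoly_eq_prod_pow_card_pow hx (n' + 1)]
    refine prod_congr rfl fun j _ => ?_
    rw [iterateFrobenius_def, add_zero, ← hpow, ← hpow, pow_pow_two_mul_inv_of_pow_pow_eq_inv hlam]

/-- Fix an odd prime power `q` and `k` an algebraic closure of
`F_{q²}`.  Let `n' ≥ 0` and `λ ∈ k^×` with `λ^{q^{2n'+1}} = λ⁻¹`.  Let `Q` be the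
minimal polynomial of `λ` over `F_{q²}` and `d = deg Q`.  Then `d ∣ 2n'+1`, the
polynomial `∏_{j<2n'+1} (x - λ^{q^{2j}})` lies in `F_{q²}[x]` and equals
`Q^{(2n'+1)/d}`, and `Q` is self-reciprocal. -/
theorem stmt14 (q : ℕ) (hq : ∃ p m : ℕ, p.Prime ∧ 0 < m ∧ q = p ^ m) (hodd : Odd q)
    {F : Type*} [Field F] [Fintype F] (hcard : Fintype.card F = q ^ 2)
    (k : Type*) [Field k] [Algebra F k] [IsAlgClosure F k]
    (n' : ℕ) (lam : k) (hlam0 : lam ≠ 0)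
    (hlam : lam ^ q ^ (2 * n' + 1) = lam⁻¹)
    (Q : Polynomial F) (hQ : Q = minpoly F lam)
    (d : ℕ) (hd : d = Q.natDegree) :
    d ∣ 2 * n' + 1 ∧
    (∏ j ∈ Finset.range (2 * n' + 1), (Polynomial.X - Polynomial.C (lam ^ q ^ (2 * j)))) =
      (Q.map (algebraMap F k)) ^ ((2 * n' + 1) / d) ∧
    recip2 q Q = Q :=
  stmt14_general q hq hcard k n' lam hlam0 hlam Q hQ d hd
end
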